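/- Let (U, d) be a complete metric space and let F : U → ℝ ∪ {+∞} be lower semicontinuous, bounded below, and finite at some point. Fix ε > 0 and u₁ ∈ U with F(u₁) < +∞, and suppose {u_n} ⊆ U is a sequence such that for each n, u_{n+1} belongs to S_n = {w ∈ U : F(w) ≤ F(u_n) − ε·d(u_n, w)}. Then for all n, m ∈ ℕ, ε·d(u_{n+m}, u_n) ≤ F(u_n) − F(u_{n+m}); consequently {F(u_n)} is a nonincreasing sequence bounded below and {u_n} is a Cauchy sequence in U. -/
import Mathlib

/-- Key convergence estimate (inequalities (sp48)–(sp49)) in the proof of the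
Ekeland variational principle: if each `u_{n+1}` lies in
`S_n = {w : F w ≤ F(u_n) − ε d(u_n, w)}`, then
`ε d(u_{n+m}, u_n) ≤ F(u_n) − F(u_{n+m})`, the values `F(u_n)` form a
nonincreasing sequence bounded below, and `{u_n}` is Cauchy. -/
theorem ekeland_sequence_cauchy
    {U : Type*} [MetricSpace U] [CompleteSpace U]
    (F : U → EReal) (hlsc : LowerSemicontinuous F)
    (hbdd : ∃ c : ℝ, ∀ x : U, (c : EReal) ≤ F x)
    (hfin : ∃ x : U, F x ≠ ⊤)
    (ε : ℝ) (hε : 0 < ε)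
    (u : ℕ → U) (hu1 : F (u 0) ≠ ⊤)
    (hS : ∀ n : ℕ,
      F (u (n + 1)) ≤ F (u n) - (ε : EReal) * ((dist (u n) (u (n + 1)) : ℝ) : EReal)) :
    (∀ n m : ℕ,
      (ε : EReal) * ((dist (u (n + m)) (u n) : ℝ) : EReal) ≤ F (u n) - F (u (n + m))) ∧
    Antitone (fun n => F (u n)) ∧
    (∃ c : ℝ, ∀ n : ℕ, (c : EReal) ≤ F (u n)) ∧
    CauchySeq u := by
  obtain ⟨c, hc⟩ := hbdd
  -- F (u n) is never ⊥
  have hnbot : ∀ n, F (u n) ≠ ⊥ := fun n =>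
    ne_bot_of_le_ne_bot (by simp) (hc (u n))
  -- F (u n) is never ⊤, by induction
  have hntop : ∀ n, F (u n) ≠ ⊤ := by
    intro n
    induction n with
    | zero => exact hu1
    | succ k ih =>
      have h := hS k
      intro htop
      rw [htop, top_le_iff] at h
      have : F (u k) - (ε : EReal) * ((dist (u k) (u (k+1)) : ℝ) : EReal) ≠ ⊤ := by
        rw [← EReal.coe_mul, sub_eq_add_neg, ← EReal.coe_neg]
        exact (EReal.add_lt_top ih (EReal.coe_ne_top _)).ne
      exact this h
  -- real-valued function
  set g : ℕ → ℝ := fun n => (F (u n)).toReal with hg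
  have hFg : ∀ n, F (u n) = ((g n : ℝ) : EReal) := fun n =>
    (EReal.coe_toReal (hntop n) (hnbot n)).symm
  have hcg : ∀ n, c ≤ g n := by
    intro n
    have := hc (u n); rw [hFg n] at this; exact_mod_cast this
  have hSg : ∀ n, g (n + 1) ≤ g n - ε * dist (u n) (u (n + 1)) := by
    intro n
    have h := hS n
    rw [hFg n, hFg (n + 1), ← EReal.coe_mul, ← EReal.coe_sub] at h
    exact_mod_cast h
  -- key estimate in ℝ
  have key : ∀ n m : ℕ, ε * dist (u (n + m)) (u n) ≤ g n - g (n + m) := by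
    intro n m
    induction m with
    | zero => simp
    | succ k ih =>
      have h1 := hSg (n + k)
      have h2 : dist (u (n + (k+1))) (u n) ≤
          dist (u (n + (k+1))) (u (n + k)) + dist (u (n + k)) (u n) :=
        dist_triangle _ _ _
      have h3 : dist (u (n + (k+1))) (u (n + k)) = dist (u (n + k)) (u (n + k + 1)) := by
        rw [dist_comm]; rfl
      show ε * dist (u (n + k + 1)) (u n) ≤ g n - g (n + k + 1)
      have h2' : dist (u (n + k + 1)) (u n) ≤
          dist (u (n + k)) (u (n + k + 1)) + dist (u (n + k) ) (u n) := by
        rw [← h3]; exact h2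
      nlinarith [hε.le]
  have gant : Antitone g := antitone_nat_of_succ_le fun n => by
    have h1 := hSg n
    have h2 := @dist_nonneg U _ (u n) (u (n + 1))
    nlinarith
  refine ⟨?_, ?_, ⟨c, fun n => hc (u n)⟩, ?_⟩
  · intro n m
    rw [hFg n, hFg (n + m), ← EReal.coe_mul, ← EReal.coe_sub]
    exact_mod_cast key n m
  · intro a b hab
    simp only [hFg]
    exact_mod_cast gant hab
  · -- g is Cauchy since antitone and bounded below
    have hgC : CauchySeq g :=
      (tendsto_atTop_ciInf gant ⟨c, fun x ⟨n, hn⟩ => hn ▸ hcg n⟩).cauchySeq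
    rw [Metric.cauchySeq_iff'] at hgC ⊢
    intro δ hδ
    obtain ⟨N, hN⟩ := hgC (ε * δ) (by positivity)
    refine ⟨N, fun n hn => ?_⟩
    have h1 : ε * dist (u n) (u N) ≤ g N - g n := by
      have := key N (n - N)
      rwa [Nat.add_sub_cancel' hn] at this
    have h2 := hN n hn
    rw [Real.dist_eq, abs_lt] at h2
    have h3 : g N - g n < ε * δ := by linarith
    nlinarith [@dist_nonneg U _ (u n) (u N)]
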